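/- Let 1 < p < ∞ and λ < 0, and set K = (−λ/(p−1))^{1/p}. For every function u : [0,π_p] → ℝ that is continuously differentiable on [0,π_p] with u(0) = u(π_p) = 0, the Sobolev-type inequality holds: 2·K^{p−1}·(coth_p(K·π_p/2))^{p−1}·(max_{x∈[0,π_p]} |u(x)|)^p ≤ ∫₀^{π_p} |u′(x)|^p dx − λ∫₀^{π_p} |u(x)|^p dx. -/

import Mathlib

/-!
The weight `w(x) = K^(p-1) coth_p(K x)^(p-1)` solves the Riccati equation
`w' + (p-1) w^(p/(p-1)) = (p-1) K^p = -λ` on `(0, ∞)`, is convex there, and blows up at `0` only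
like `x^(1-p)`. By Young's inequality `(w |u|^p)' ≤ |u'|^p - λ |u|^p`, so integrating from `0`
(where `w |u|^p → 0` because `u(0) = 0`) to a point `x₀` where `|u|` is maximal gives
`w(x₀) max |u|^p ≤ ∫₀^{x₀} (|u'|^p - λ |u|^p)`; reflecting, `w(π_p - x₀) max |u|^p` is bounded by
the integral over `[x₀, π_p]`. Adding the two and using `w(x₀) + w(π_p - x₀) ≥ 2 w(π_p / 2)`
gives the inequality.
-/

/-- The generalized π: `π_p = 2 ∫₀¹ (1 - tᵖ)^(-1/p) dt`. -/
noncomputable def piP (p : ℝ) : ℝ := 2 * ∫ t in (0:ℝ)..1, (1 - t ^ p) ^ (-(1 / p))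

/-- `arcsinh_p x = ∫₀ˣ (1 + tᵖ)^(-1/p) dt`. -/
noncomputable def arcsinhP (p x : ℝ) : ℝ := ∫ t in (0:ℝ)..x, (1 + t ^ p) ^ (-(1 / p))

/-- `sinh_p : [0,∞) → [0,∞)`, defined as the inverse of `arcsinh_p` on `[0,∞)`. -/
noncomputable def sinhP (p : ℝ) : ℝ → ℝ := Function.invFunOn (arcsinhP p) (Set.Ici 0)

/-- `cosh_p x = (1 + sinh_p x ^ p)^(1/p)`. -/
noncomputable def coshP (p x : ℝ) : ℝ := (1 + sinhP p x ^ p) ^ (1 / p)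

/-- `coth_p x = cosh_p x / sinh_p x`. -/
noncomputable def cothP (p x : ℝ) : ℝ := coshP p x / sinhP p x

open Set MeasureTheory Real Filter Topology

section Hyperbolic

variable {p : ℝ}

lemma one_add_rpow_rpow_neg_inv_pos {t : ℝ} (ht : 0 ≤ t) : 0 < (1 + t ^ p) ^ (-(1 / p)) :=
  rpow_pos_of_pos (by positivity) _

lemma arcsinhP_zero : arcsinhP p 0 = 0 := intervalIntegral.integral_same

variable (hp : 0 < p)
include hp

lemma one_add_rpow_rpow_neg_inv_le_one {t : ℝ} (ht : 0 ≤ t) : (1 + t ^ p) ^ (-(1 / p)) ≤ 1 :=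
  rpow_le_one_of_one_le_of_nonpos (le_add_of_nonneg_right (rpow_nonneg ht p))
    (neg_nonpos.2 (by positivity))

lemma continuousAt_one_add_rpow_rpow_neg_inv {t : ℝ} (ht : 0 ≤ t) :
    ContinuousAt (fun t : ℝ => (1 + t ^ p) ^ (-(1 / p))) t :=
  (continuousAt_const.add (continuousAt_rpow_const t p (Or.inr hp.le))).rpow_const
    (Or.inl (by positivity : (0 : ℝ) < 1 + t ^ p).ne')

lemma intervalIntegrable_one_add_rpow_rpow_neg_inv {a b : ℝ} (ha : 0 ≤ a) (hb : 0 ≤ b) :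
    IntervalIntegrable (fun t : ℝ => (1 + t ^ p) ^ (-(1 / p))) volume a b :=
  ContinuousOn.intervalIntegrable fun _ ht =>
    (continuousAt_one_add_rpow_rpow_neg_inv hp ((le_min ha hb).trans ht.1)).continuousWithinAt

lemma arcsinhP_sub_arcsinhP {a b : ℝ} (ha : 0 ≤ a) (hb : 0 ≤ b) :
    arcsinhP p b - arcsinhP p a = ∫ t in a..b, (1 + t ^ p) ^ (-(1 / p)) := by
  rw [arcsinhP, arcsinhP, intervalIntegral.integral_interval_sub_left
    (intervalIntegrable_one_add_rpow_rpow_neg_inv hp le_rfl hb)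
    (intervalIntegrable_one_add_rpow_rpow_neg_inv hp le_rfl ha)]

lemma arcsinhP_hasDerivAt {x : ℝ} (hx : 0 < x) :
    HasDerivAt (arcsinhP p) ((1 + x ^ p) ^ (-(1 / p))) x :=
  intervalIntegral.integral_hasDerivAt_right
    (intervalIntegrable_one_add_rpow_rpow_neg_inv hp le_rfl hx.le)
    (ContinuousAt.stronglyMeasurableAtFilter isOpen_Ioi
      (fun _ ht => continuousAt_one_add_rpow_rpow_neg_inv hp (le_of_lt ht)) x hx)
    (continuousAt_one_add_rpow_rpow_neg_inv hp hx.le)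

lemma arcsinhP_continuousOn_Icc {b : ℝ} (hb : 0 ≤ b) : ContinuousOn (arcsinhP p) (Icc 0 b) := by
  have h := intervalIntegral.continuousOn_primitive_interval'
    (intervalIntegrable_one_add_rpow_rpow_neg_inv hp le_rfl hb) left_mem_uIcc
  rwa [uIcc_of_le hb] at h

lemma arcsinhP_strictMonoOn : StrictMonoOn (arcsinhP p) (Ici 0) := fun a ha b hb hab => by
  have hpos : 0 < ∫ t in a..b, (1 + t ^ p) ^ (-(1 / p)) :=
    intervalIntegral.intervalIntegral_pos_of_pos_on
      (intervalIntegrable_one_add_rpow_rpow_neg_inv hp ha hb)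
      (fun t ht => one_add_rpow_rpow_neg_inv_pos (le_trans ha ht.1.le)) hab
  linarith [arcsinhP_sub_arcsinhP hp ha hb]

lemma arcsinhP_nonneg {x : ℝ} (hx : 0 ≤ x) : 0 ≤ arcsinhP p x := by
  simpa [arcsinhP_zero] using (arcsinhP_strictMonoOn hp).monotoneOn self_mem_Ici hx hx

lemma arcsinhP_le_self {x : ℝ} (hx : 0 ≤ x) : arcsinhP p x ≤ x := by
  simpa [arcsinhP] using intervalIntegral.integral_mono_on hx
    (intervalIntegrable_one_add_rpow_rpow_neg_inv hp le_rfl hx) intervalIntegrable_const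
    fun t ht => one_add_rpow_rpow_neg_inv_le_one hp ht.1

/-- On `[1, x]` the integrand is at least `2^(-1/p) / t`, because `1 + t^p ≤ 2 t^p`. -/
lemma mul_log_le_arcsinhP {x : ℝ} (hx : 1 ≤ x) :
    (2 : ℝ) ^ (-(1 / p)) * log x ≤ arcsinhP p x := by
  have hx0 : (0 : ℝ) < x := one_pos.trans_le hx
  have hlower : ∫ t in (1 : ℝ)..x, (2 : ℝ) ^ (-(1 / p)) * t⁻¹ ≤
      ∫ t in (1 : ℝ)..x, (1 + t ^ p) ^ (-(1 / p)) := by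
    refine intervalIntegral.integral_mono_on hx
      (ContinuousOn.intervalIntegrable (continuousOn_const.mul (continuousOn_inv₀.mono ?_)))
      (intervalIntegrable_one_add_rpow_rpow_neg_inv hp zero_le_one hx0.le) fun t ht => ?_
    · rw [uIcc_of_le hx]
      exact fun t ht => (one_pos.trans_le ht.1).ne'
    have ht0 : 0 < t := one_pos.trans_le ht.1
    calc (2 : ℝ) ^ (-(1 / p)) * t⁻¹ = (2 * t ^ p) ^ (-(1 / p)) := by
          rw [mul_rpow zero_le_two (rpow_nonneg ht0.le p), ← rpow_mul ht0.le,
            mul_neg, mul_one_div_cancel hp.ne', rpow_neg_one]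
      _ ≤ (1 + t ^ p) ^ (-(1 / p)) :=
          rpow_le_rpow_of_nonpos (by positivity)
            (by linarith [one_le_rpow ht.1 hp.le]) (neg_nonpos.2 (by positivity))
  have hint : ∫ t in (1 : ℝ)..x, (2 : ℝ) ^ (-(1 / p)) * t⁻¹ = (2 : ℝ) ^ (-(1 / p)) * log x := by
    rw [intervalIntegral.integral_const_mul, integral_inv_of_pos one_pos hx0, div_one]
  linarith [arcsinhP_sub_arcsinhP hp zero_le_one hx0.le, arcsinhP_nonneg hp zero_le_one]

lemma arcsinhP_surjOn : SurjOn (arcsinhP p) (Ici 0) (Ici 0) := fun y (hy : 0 ≤ y) => by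
  set X := exp ((2 : ℝ) ^ (1 / p) * y)
  have hX : 1 ≤ X := one_le_exp (by positivity)
  have hyX : y ≤ arcsinhP p X := by
    have h := mul_log_le_arcsinhP hp hX
    rwa [log_exp, ← mul_assoc, ← rpow_add zero_lt_two, neg_add_cancel, rpow_zero, one_mul] at h
  obtain ⟨x, hx, rfl⟩ := intermediate_value_Icc (zero_le_one.trans hX)
    (arcsinhP_continuousOn_Icc hp (zero_le_one.trans hX)) ⟨arcsinhP_zero.symm ▸ hy, hyX⟩
  exact ⟨x, hx.1, rfl⟩

lemma arcsinhP_sinhP {y : ℝ} (hy : 0 ≤ y) : arcsinhP p (sinhP p y) = y :=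
  Function.invFunOn_eq (arcsinhP_surjOn hp hy)

lemma sinhP_nonneg {y : ℝ} (hy : 0 ≤ y) : 0 ≤ sinhP p y :=
  Function.invFunOn_mem (arcsinhP_surjOn hp hy)

lemma self_le_sinhP {y : ℝ} (hy : 0 ≤ y) : y ≤ sinhP p y := by
  simpa [arcsinhP_sinhP hp hy] using arcsinhP_le_self hp (sinhP_nonneg hp hy)

lemma sinhP_pos {y : ℝ} (hy : 0 < y) : 0 < sinhP p y :=
  hy.trans_le (self_le_sinhP hp hy.le)

lemma sinhP_arcsinhP {x : ℝ} (hx : 0 ≤ x) : sinhP p (arcsinhP p x) = x :=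
  (arcsinhP_strictMonoOn hp).injOn (sinhP_nonneg hp (arcsinhP_nonneg hp hx)) hx
    (arcsinhP_sinhP hp (arcsinhP_nonneg hp hx))

lemma sinhP_strictMonoOn : StrictMonoOn (sinhP p) (Ici 0) := fun a ha b hb hab => by
  rwa [← (arcsinhP_strictMonoOn hp).lt_iff_lt (sinhP_nonneg hp ha) (sinhP_nonneg hp hb),
    arcsinhP_sinhP hp ha, arcsinhP_sinhP hp hb]

lemma sinhP_continuousAt {y : ℝ} (hy : 0 < y) : ContinuousAt (sinhP p) y := by
  refine (sinhP_strictMonoOn hp).continuousAt_of_image_mem_nhds (Ici_mem_nhds hy)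
    (mem_of_superset (Ici_mem_nhds (sinhP_pos hp hy)) fun x (hx : 0 ≤ x) => ?_)
  exact ⟨arcsinhP p x, arcsinhP_nonneg hp hx, sinhP_arcsinhP hp hx⟩

lemma coshP_rpow {y : ℝ} (hy : 0 ≤ y) : coshP p y ^ p = 1 + sinhP p y ^ p := by
  rw [coshP, ← rpow_mul (by positivity [sinhP_nonneg hp hy]), one_div_mul_cancel hp.ne', rpow_one]

lemma one_le_coshP {y : ℝ} (hy : 0 ≤ y) : 1 ≤ coshP p y :=
  one_le_rpow (le_add_of_nonneg_right (rpow_nonneg (sinhP_nonneg hp hy) p)) (by positivity)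

lemma coshP_pos {y : ℝ} (hy : 0 ≤ y) : 0 < coshP p y :=
  one_pos.trans_le (one_le_coshP hp hy)

lemma coshP_le_coshP {a b : ℝ} (ha : 0 ≤ a) (hab : a ≤ b) : coshP p a ≤ coshP p b := by
  have hs : sinhP p a ≤ sinhP p b :=
    (sinhP_strictMonoOn hp).monotoneOn ha (ha.trans hab : 0 ≤ b) hab
  exact rpow_le_rpow (by positivity [sinhP_nonneg hp ha])
    (add_le_add_right (rpow_le_rpow (sinhP_nonneg hp ha) hs hp.le) 1) (by positivity)

lemma sinhP_hasDerivAt {y : ℝ} (hy : 0 < y) : HasDerivAt (sinhP p) (coshP p y) y := by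
  have hs := sinhP_pos hp hy
  have h := (arcsinhP_hasDerivAt hp hs).of_local_left_inverse (sinhP_continuousAt hp hy)
    (one_add_rpow_rpow_neg_inv_pos hs.le).ne'
    (eventually_of_mem (Ioi_mem_nhds hy) fun z hz => arcsinhP_sinhP hp (le_of_lt hz))
  rwa [rpow_neg (by positivity), inv_inv] at h

lemma coshP_hasDerivAt {y : ℝ} (hy : 0 < y) :
    HasDerivAt (coshP p) (coshP p y ^ (2 - p) * sinhP p y ^ (p - 1)) y := by
  have hs := sinhP_pos hp hy
  have hc := coshP_pos hp hy.le
  have h := ((hasDerivAt_rpow_const (Or.inl hs.ne')).comp y (sinhP_hasDerivAt hp hy)).const_add 1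
    |>.rpow_const (p := 1 / p) (Or.inl (by positivity : (0 : ℝ) < 1 + sinhP p y ^ p).ne')
  refine h.congr_deriv ?_
  rw [Function.comp_apply, ← coshP_rpow hp hy.le, ← rpow_mul hc.le,
    show p * (1 / p - 1) = 1 - p by field_simp, show 2 - p = 1 + (1 - p) by ring, rpow_add hc,
    rpow_one]
  field_simp

lemma cothP_pos {y : ℝ} (hy : 0 < y) : 0 < cothP p y :=
  div_pos (coshP_pos hp hy.le) (sinhP_pos hp hy)

lemma cothP_le {y b : ℝ} (hy : 0 < y) (hyb : y ≤ b) : cothP p y ≤ coshP p b / y :=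
  div_le_div₀ (coshP_pos hp (hy.le.trans hyb)).le (coshP_le_coshP hp hy.le hyb) hy
    (self_le_sinhP hp hy.le)

lemma cothP_hasDerivAt {y : ℝ} (hy : 0 < y) :
    HasDerivAt (cothP p) (-(coshP p y ^ (2 - p) / sinhP p y ^ 2)) y := by
  have hs := sinhP_pos hp hy
  have hc := coshP_pos hp hy.le
  refine ((coshP_hasDerivAt hp hy).div (sinhP_hasDerivAt hp hy) hs.ne').congr_deriv ?_
  have hcc : coshP p y * coshP p y = coshP p y ^ (2 - p) * (1 + sinhP p y ^ p) := by
    rw [← coshP_rpow hp hy.le, ← rpow_add hc, sub_add_cancel, rpow_two, sq]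
  rw [hcc, mul_assoc, ← rpow_add_one hs.ne', sub_add_cancel]
  ring

lemma cothP_rpow_hasDerivAt {y : ℝ} (hy : 0 < y) :
    HasDerivAt (fun z => cothP p z ^ (p - 1)) (-(p - 1) / sinhP p y ^ p) y := by
  have hs := sinhP_pos hp hy
  have hc := coshP_pos hp hy.le
  refine ((cothP_hasDerivAt hp hy).rpow_const (p := p - 1)
    (Or.inl (cothP_pos hp hy).ne')).congr_deriv ?_
  have hcc : coshP p y ^ (2 - p) * coshP p y ^ (p - 1 - 1) = 1 := by
    rw [← rpow_add hc, show 2 - p + (p - 1 - 1) = 0 by ring, rpow_zero]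
  have hss : sinhP p y ^ 2 * sinhP p y ^ (p - 1 - 1) = sinhP p y ^ p := by
    rw [← rpow_two, ← rpow_add hs, show 2 + (p - 1 - 1) = p by ring]
  rw [cothP, div_rpow hc.le hs.le, ← hss]
  field_simp
  linear_combination (1 - p) * hcc

end Hyperbolic

noncomputable def cothWeight (p K x : ℝ) : ℝ := K ^ (p - 1) * cothP p (K * x) ^ (p - 1)

section CothWeight

variable {p K : ℝ} (hp : 1 < p) (hK : 0 < K)
include hp hK

lemma cothWeight_pos {x : ℝ} (hx : 0 < x) : 0 < cothWeight p K x :=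
  mul_pos (rpow_pos_of_pos hK _) (rpow_pos_of_pos (cothP_pos (by linarith) (mul_pos hK hx)) _)

lemma cothWeight_hasDerivAt {x : ℝ} (hx : 0 < x) :
    HasDerivAt (cothWeight p K) (-((p - 1) * K ^ p) / sinhP p (K * x) ^ p) x := by
  have h := ((cothP_rpow_hasDerivAt (p := p) (by linarith) (mul_pos hK hx)).comp x
    ((hasDerivAt_id x).const_mul K)).const_mul (K ^ (p - 1))
  refine h.congr_deriv ?_
  rw [show p = p - 1 + 1 by ring, rpow_add_one hK.ne', add_sub_cancel_right]
  ring

lemma cothWeight_riccati {x : ℝ} (hx : 0 < x) :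
    -((p - 1) * K ^ p) / sinhP p (K * x) ^ p + (p - 1) * cothWeight p K x ^ (p / (p - 1)) =
      (p - 1) * K ^ p := by
  have hp0 : 0 < p := by linarith
  have hKx := mul_pos hK hx
  have hs := rpow_pos_of_pos (sinhP_pos hp0 hKx) p
  have hw : cothWeight p K x ^ (p / (p - 1)) = K ^ p * cothP p (K * x) ^ p := by
    rw [cothWeight, mul_rpow (by positivity) (by positivity [cothP_pos hp0 hKx]),
      ← rpow_mul hK.le, ← rpow_mul (cothP_pos hp0 hKx).le, mul_div_cancel₀ _ (by linarith)]
  rw [hw, cothP, div_rpow (coshP_pos hp0 hKx.le).le (sinhP_pos hp0 hKx).le,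
    coshP_rpow hp0 hKx.le]
  field_simp
  ring

lemma cothWeight_convexOn : ConvexOn ℝ (Ioi 0) (cothWeight p K) := by
  refine MonotoneOn.convexOn_of_deriv (convex_Ioi 0)
    (fun x hx => (cothWeight_hasDerivAt hp hK hx).continuousAt.continuousWithinAt)
    (fun x hx => ?_) (fun a ha b hb hab => ?_) <;> rw [interior_Ioi] at *
  · exact (cothWeight_hasDerivAt hp hK hx).differentiableAt.differentiableWithinAt
  have hp0 : 0 < p := by linarith
  have hKa := mul_pos hK ha
  rw [(cothWeight_hasDerivAt hp hK ha).deriv, (cothWeight_hasDerivAt hp hK hb).deriv,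
    neg_div, neg_div, neg_le_neg_iff]
  refine div_le_div_of_nonneg_left (by positivity [sub_pos.2 hp])
    (rpow_pos_of_pos (sinhP_pos hp0 hKa) p) (rpow_le_rpow (sinhP_pos hp0 hKa).le ?_ hp0.le)
  exact (sinhP_strictMonoOn hp0).monotoneOn hKa.le (mul_pos hK hb).le
    (mul_le_mul_of_nonneg_left hab hK.le)

lemma two_mul_cothWeight_half_le {x L : ℝ} (hx : 0 < x) (hxL : x < L) :
    2 * cothWeight p K (L / 2) ≤ cothWeight p K x + cothWeight p K (L - x) := by
  have h := (cothWeight_convexOn hp hK).2 hx (sub_pos.2 hxL : 0 < L - x)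
    (by norm_num : (0 : ℝ) ≤ 1 / 2) (by norm_num : (0 : ℝ) ≤ 1 / 2) (by norm_num)
  rw [smul_eq_mul, smul_eq_mul, smul_eq_mul, smul_eq_mul,
    show 1 / 2 * x + 1 / 2 * (L - x) = L / 2 by ring] at h
  linarith

lemma cothWeight_mul_rpow_le {x b : ℝ} (hx : 0 < x) (hxb : x ≤ b) :
    cothWeight p K x * x ^ p ≤ coshP p (K * b) ^ (p - 1) * x := by
  have hp0 : 0 < p := by linarith
  have hKx := mul_pos hK hx
  have hKxb := mul_le_mul_of_nonneg_left hxb hK.le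
  have hcoth := cothP_le hp0 hKx hKxb
  calc cothWeight p K x * x ^ p ≤ K ^ (p - 1) * (coshP p (K * b) / (K * x)) ^ (p - 1) * x ^ p := by
        unfold cothWeight
        gcongr
        exact (cothP_pos hp0 hKx).le
    _ = coshP p (K * b) ^ (p - 1) * x := by
        rw [div_rpow (coshP_pos hp0 (hKx.le.trans hKxb)).le hKx.le, mul_rpow hK.le hx.le,
          show p = p - 1 + 1 by ring, rpow_add_one hx.ne', add_sub_cancel_right]
        field_simp

end CothWeight

lemma abs_le_mul_of_hasDerivWithinAt {u u' : ℝ → ℝ} {c C : ℝ}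
    (hu : ∀ x ∈ Icc 0 c, HasDerivWithinAt u (u' x) (Icc 0 c) x) (hC : ∀ x ∈ Icc 0 c, ‖u' x‖ ≤ C)
    (hu0 : u 0 = 0) {x : ℝ} (hx : x ∈ Icc 0 c) : |u x| ≤ C * x := by
  simpa [hu0, abs_of_nonneg hx.1] using Convex.norm_image_sub_le_of_norm_hasDerivWithin_le hu hC
    (convex_Icc 0 c) (left_mem_Icc.2 (hx.1.trans hx.2)) hx

lemma continuous_abs_rpow {p : ℝ} (hp : 0 ≤ p) : Continuous fun t : ℝ => |t| ^ p :=
  continuous_abs.rpow_const fun _ => Or.inr hp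

section Energy

variable {p : ℝ} (hp : 1 < p)
include hp

lemma abs_rpow_sub_two_mul_mul_le (a b : ℝ) : |a| ^ (p - 2) * a * b ≤ |a| ^ (p - 1) * |b| :=
  calc |a| ^ (p - 2) * a * b ≤ |(|a| ^ (p - 2) * a * b)| := le_abs_self _
    _ = |a| ^ (p - 1) * |b| := by
      rw [abs_mul, abs_mul, abs_of_nonneg (rpow_nonneg (abs_nonneg a) _),
        show p - 1 = p - 2 + 1 by ring, rpow_add_one' (abs_nonneg a) (by linarith)]

/-- Young's inequality with the conjugate exponents `p` and `p / (p - 1)`. -/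
lemma mul_mul_rpow_sub_one_mul_le {w a b : ℝ} (hw : 0 ≤ w) (ha : 0 ≤ a) (hb : 0 ≤ b) :
    p * (w * a ^ (p - 1) * b) ≤ b ^ p + (p - 1) * (w ^ (p / (p - 1)) * a ^ p) := by
  have hy := young_inequality_of_nonneg hb (mul_nonneg hw (rpow_nonneg ha (p - 1)))
    (HolderConjugate.conjExponent hp)
  rw [conjExponent, mul_rpow hw (rpow_nonneg ha _), ← rpow_mul ha,
    mul_div_cancel₀ _ (by linarith : p - 1 ≠ 0)] at hy
  have hp0 : 0 < p := by linarith
  calc p * (w * a ^ (p - 1) * b) = p * (b * (w * a ^ (p - 1))) := by ring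
    _ ≤ p * (b ^ p / p + w ^ (p / (p - 1)) * a ^ p / (p / (p - 1))) := by gcongr
    _ = b ^ p + (p - 1) * (w ^ (p / (p - 1)) * a ^ p) := by field_simp

/-- The left side is `(w |u|^p)'` at a point where `u = a` and `u' = b`. -/
lemma weight_mul_abs_rpow_deriv_le {w w' μ a b : ℝ} (hw : 0 ≤ w)
    (hric : w' + (p - 1) * w ^ (p / (p - 1)) ≤ μ) :
    w' * |a| ^ p + w * (p * |a| ^ (p - 2) * a * b) ≤ |b| ^ p + μ * |a| ^ p := by
  have hchain : w * (p * |a| ^ (p - 2) * a * b) ≤ p * (w * |a| ^ (p - 1) * |b|) := by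
    have := mul_le_mul_of_nonneg_left (abs_rpow_sub_two_mul_mul_le hp a b)
      (mul_nonneg hw (by linarith : (0 : ℝ) ≤ p))
    linarith
  have hyoung := mul_mul_rpow_sub_one_mul_le hp hw (abs_nonneg a) (abs_nonneg b)
  have hweight := mul_le_mul_of_nonneg_right hric (rpow_nonneg (abs_nonneg a) p)
  linarith

/-- `x ↦ ∫₀ˣ (|u'|^p + μ |u|^p) - w x |u x|^p` is monotone on `(0, c]` and tends to `0` at `0⁺`. -/
lemma weight_mul_abs_rpow_le_integral {w w' u u' : ℝ → ℝ} {μ c : ℝ} (hc : 0 < c)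
    (hw : ∀ x ∈ Ioc 0 c, HasDerivAt w (w' x) x) (hw0 : ∀ x ∈ Ioc 0 c, 0 ≤ w x)
    (hric : ∀ x ∈ Ioc 0 c, w' x + (p - 1) * w x ^ (p / (p - 1)) ≤ μ)
    (hu' : ContinuousOn u' (Icc 0 c))
    (hu : ∀ x ∈ Icc 0 c, HasDerivWithinAt u (u' x) (Icc 0 c) x)
    (hlim : Tendsto (fun x => w x * |u x| ^ p) (𝓝[>] 0) (𝓝 0)) :
    w c * |u c| ^ p ≤ ∫ x in (0 : ℝ)..c, (|u' x| ^ p + μ * |u x| ^ p) := by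
  set F := fun x => |u' x| ^ p + μ * |u x| ^ p
  set G := fun x => (∫ t in (0 : ℝ)..x, F t) - w x * |u x| ^ p
  have hu_cont : ContinuousOn u (Icc 0 c) := fun x hx => (hu x hx).continuousWithinAt
  have hF : ContinuousOn F (Icc 0 c) :=
    ((continuous_abs_rpow (by linarith)).comp_continuousOn hu').add
      (continuousOn_const.mul ((continuous_abs_rpow (by linarith)).comp_continuousOn hu_cont))
  have hprim : ContinuousOn (fun x => ∫ t in (0 : ℝ)..x, F t) (Icc 0 c) := by
    have h := intervalIntegral.continuousOn_primitive_interval'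
      (hF.intervalIntegrable_of_Icc (μ := volume) hc.le) left_mem_uIcc
    rwa [uIcc_of_le hc.le] at h
  have hG : ContinuousOn G (Ioc 0 c) :=
    (hprim.mono Ioc_subset_Icc_self).sub <|
      (show ContinuousOn w (Ioc 0 c) from
        fun x hx => (hw x hx).continuousAt.continuousWithinAt).mul
        ((continuous_abs_rpow (by linarith)).comp_continuousOn (hu_cont.mono Ioc_subset_Icc_self))
  have hG' : ∀ x ∈ Ioo 0 c, HasDerivAt G
      (F x - (w' x * |u x| ^ p + w x * (p * |u x| ^ (p - 2) * u x * u' x))) x := by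
    intro x hx
    have hFx : ContinuousAt F x := hF.continuousAt (Icc_mem_nhds hx.1 hx.2)
    have hprim' : HasDerivAt (fun x => ∫ t in (0 : ℝ)..x, F t) (F x) x :=
      intervalIntegral.integral_hasDerivAt_right
        ((hF.mono (uIcc_subset_Icc (left_mem_Icc.2 hc.le) ⟨hx.1.le, hx.2.le⟩)).intervalIntegrable)
        ((hF.mono Ioo_subset_Icc_self).stronglyMeasurableAtFilter isOpen_Ioo x hx) hFx
    have hux : HasDerivAt u (u' x) x := (hu x (Ioo_subset_Icc_self hx)).hasDerivAt
      (Icc_mem_nhds hx.1 hx.2)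
    exact hprim'.sub ((hw x (Ioo_subset_Ioc_self hx)).mul
      ((hasDerivAt_abs_rpow (u x) hp).comp x hux))
  have hmono : MonotoneOn G (Ioc 0 c) := by
    refine monotoneOn_of_hasDerivWithinAt_nonneg (convex_Ioc 0 c) hG
      (f' := fun x => F x - (w' x * |u x| ^ p + w x * (p * |u x| ^ (p - 2) * u x * u' x)))
      (fun x hx => ?_) (fun x hx => ?_) <;> rw [interior_Ioc] at *
    · exact (hG' x hx).hasDerivWithinAt
    · exact sub_nonneg.2 (weight_mul_abs_rpow_deriv_le hp (hw0 x (Ioo_subset_Ioc_self hx))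
        (hric x (Ioo_subset_Ioc_self hx)))
  have hG0 : Tendsto G (𝓝[>] 0) (𝓝 0) := by
    have h := ((hprim 0 (left_mem_Icc.2 hc.le)).mono_left
      (nhdsWithin_le_of_mem (Icc_mem_nhdsGT hc))).sub hlim
    simpa using h
  have hGc : 0 ≤ G c := le_of_tendsto hG0 <| eventually_of_mem (Ioc_mem_nhdsGT hc)
    fun x hx => hmono hx (right_mem_Ioc.2 hc) hx.2
  simpa [G, F, sub_nonneg] using hGc

variable {K : ℝ} (hK : 0 < K)
include hK

lemma cothWeight_mul_abs_rpow_le_integral {u u' : ℝ → ℝ} {c : ℝ} (hc : 0 < c)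
    (hu' : ContinuousOn u' (Icc 0 c))
    (hu : ∀ x ∈ Icc 0 c, HasDerivWithinAt u (u' x) (Icc 0 c) x) (hu0 : u 0 = 0) :
    cothWeight p K c * |u c| ^ p ≤
      ∫ x in (0 : ℝ)..c, (|u' x| ^ p + (p - 1) * K ^ p * |u x| ^ p) := by
  refine weight_mul_abs_rpow_le_integral hp hc (fun x hx => cothWeight_hasDerivAt hp hK hx.1)
    (fun x hx => (cothWeight_pos hp hK hx.1).le) (fun x hx => (cothWeight_riccati hp hK hx.1).le)
    hu' hu ?_
  obtain ⟨C, hC⟩ := isCompact_Icc.exists_bound_of_continuousOn hu'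
  have hC0 : 0 ≤ C := (norm_nonneg _).trans (hC 0 (left_mem_Icc.2 hc.le))
  set A := C ^ p * coshP p (K * c) ^ (p - 1)
  have hbound : ∀ x ∈ Ioc 0 c, cothWeight p K x * |u x| ^ p ≤ A * x := fun x hx => by
    have hux := abs_le_mul_of_hasDerivWithinAt hu hC hu0 (Ioc_subset_Icc_self hx)
    calc cothWeight p K x * |u x| ^ p ≤ cothWeight p K x * (C * x) ^ p := by
          gcongr
          exact (cothWeight_pos hp hK hx.1).le
      _ = C ^ p * (cothWeight p K x * x ^ p) := by rw [mul_rpow hC0 hx.1.le]; ring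
      _ ≤ A * x := by
          rw [mul_assoc]
          exact mul_le_mul_of_nonneg_left (cothWeight_mul_rpow_le hp hK hx.1 hx.2) (by positivity)
  refine squeeze_zero' (eventually_nhdsWithin_of_forall fun x hx =>
      mul_nonneg (cothWeight_pos hp hK hx).le (rpow_nonneg (abs_nonneg _) p))
    (eventually_of_mem (Ioc_mem_nhdsGT hc) hbound) ?_
  simpa using ((continuous_const_mul A).tendsto 0).mono_left nhdsWithin_le_nhds

lemma cothWeight_mul_abs_rpow_le_integral_of_right {u u' : ℝ → ℝ} {a L : ℝ} (haL : a < L)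
    (hu' : ContinuousOn u' (Icc a L))
    (hu : ∀ x ∈ Icc a L, HasDerivWithinAt u (u' x) (Icc a L) x) (huL : u L = 0) :
    cothWeight p K (L - a) * |u a| ^ p ≤
      ∫ x in a..L, (|u' x| ^ p + (p - 1) * K ^ p * |u x| ^ p) := by
  have hmaps : MapsTo (fun x => L - x) (Icc 0 (L - a)) (Icc a L) := fun x hx =>
    ⟨by linarith [hx.2], by linarith [hx.1]⟩
  have h := cothWeight_mul_abs_rpow_le_integral hp hK (u := fun x => u (L - x))
    (u' := fun x => -u' (L - x)) (sub_pos.2 haL)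
    (hu'.comp (continuousOn_const.sub continuousOn_id) hmaps).neg
    (fun x hx => ((hu (L - x) (hmaps hx)).comp x
      ((hasDerivAt_id x).const_sub L).hasDerivWithinAt hmaps).congr_deriv (by simp))
    (by simpa using huL)
  simpa [abs_neg, intervalIntegral.integral_comp_sub_left
    (fun x => |u' x| ^ p + (p - 1) * K ^ p * |u x| ^ p) L] using h

lemma two_mul_cothWeight_mul_abs_rpow_le_integral {u u' : ℝ → ℝ} {L : ℝ}
    (hu' : ContinuousOn u' (Icc 0 L))
    (hu : ∀ x ∈ Icc 0 L, HasDerivWithinAt u (u' x) (Icc 0 L) x) (hu0 : u 0 = 0) (huL : u L = 0)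
    {x : ℝ} (hx : x ∈ Icc 0 L) :
    2 * cothWeight p K (L / 2) * |u x| ^ p ≤
      ∫ x in (0 : ℝ)..L, (|u' x| ^ p + (p - 1) * K ^ p * |u x| ^ p) := by
  set F := fun x => |u' x| ^ p + (p - 1) * K ^ p * |u x| ^ p
  have hp0 : 0 < p := by linarith
  have hF : ContinuousOn F (Icc 0 L) :=
    ((continuous_abs_rpow (by linarith)).comp_continuousOn hu').add (continuousOn_const.mul
      ((continuous_abs_rpow (by linarith)).comp_continuousOn
        fun x hx => (hu x hx).continuousWithinAt))
  have hvanish (h : u x = 0) : 2 * cothWeight p K (L / 2) * |u x| ^ p ≤ ∫ x in (0 : ℝ)..L, F x := by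
    rw [h, abs_zero, zero_rpow hp0.ne', mul_zero]
    exact intervalIntegral.integral_nonneg (hx.1.trans hx.2) fun y _ =>
      add_nonneg (rpow_nonneg (abs_nonneg _) p) (mul_nonneg (mul_nonneg (sub_pos.2 hp).le
        (rpow_nonneg hK.le p)) (rpow_nonneg (abs_nonneg _) p))
  rcases hx.1.eq_or_lt with rfl | hx0
  · exact hvanish hu0
  rcases hx.2.eq_or_lt with rfl | hxL
  · exact hvanish huL
  have hsub0 : Icc 0 x ⊆ Icc 0 L := Icc_subset_Icc_right hx.2
  have hsubL : Icc x L ⊆ Icc 0 L := Icc_subset_Icc_left hx.1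
  have hleft := cothWeight_mul_abs_rpow_le_integral hp hK hx0 (hu'.mono hsub0)
    (fun y hy => (hu y (hsub0 hy)).mono hsub0) hu0
  have hright := cothWeight_mul_abs_rpow_le_integral_of_right hp hK hxL (hu'.mono hsubL)
    (fun y hy => (hu y (hsubL hy)).mono hsubL) huL
  rw [← intervalIntegral.integral_add_adjacent_intervals
    ((hF.mono hsub0).intervalIntegrable_of_Icc hx.1)
    ((hF.mono hsubL).intervalIntegrable_of_Icc hx.2)]
  calc 2 * cothWeight p K (L / 2) * |u x| ^ p
      ≤ (cothWeight p K x + cothWeight p K (L - x)) * |u x| ^ p :=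
        mul_le_mul_of_nonneg_right (two_mul_cothWeight_half_le hp hK hx0 hxL)
          (rpow_nonneg (abs_nonneg _) p)
    _ ≤ _ := by linarith

end Energy

lemma piP_nonneg {p : ℝ} (hp : 0 < p) : 0 ≤ piP p :=
  mul_nonneg zero_le_two <| intervalIntegral.integral_nonneg zero_le_one fun _ ht =>
    rpow_nonneg (sub_nonneg.2 (rpow_le_one ht.1 ht.2 hp.le)) _

/-- Sobolev-type inequality for `λ < 0`, `K = (-λ/(p-1))^(1/p)`:
`2 K^(p-1) (coth_p (K π_p/2))^(p-1) (max |u|)^p ≤ ∫ |u'|^p - λ ∫ |u|^p`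
for `u` continuously differentiable on `[0, π_p]` with `u(0) = u(π_p) = 0`. -/
theorem sobolev_neg_lambda (p lam K : ℝ) (hp : 1 < p) (hlam : lam < 0)
    (hK : K = (-lam / (p - 1)) ^ (1 / p))
    (u u' : ℝ → ℝ)
    (hu' : ContinuousOn u' (Set.Icc 0 (piP p)))
    (huderiv : ∀ x ∈ Set.Icc (0:ℝ) (piP p), HasDerivWithinAt u (u' x) (Set.Icc 0 (piP p)) x)
    (hu0 : u 0 = 0) (hupi : u (piP p) = 0) :
    2 * K ^ (p - 1) * (cothP p (K * piP p / 2)) ^ (p - 1) *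
        (sSup ((fun x => |u x|) '' Set.Icc 0 (piP p))) ^ p ≤
      (∫ x in (0:ℝ)..piP p, |u' x| ^ p) - lam * ∫ x in (0:ℝ)..piP p, |u x| ^ p := by
  have hp0 : 0 < p := by linarith
  have hlam' : 0 < -lam / (p - 1) := div_pos (neg_pos.2 hlam) (sub_pos.2 hp)
  have hK0 : 0 < K := hK ▸ rpow_pos_of_pos hlam' _
  have hKp : (p - 1) * K ^ p = -lam := by
    rw [hK, ← rpow_mul hlam'.le, one_div_mul_cancel hp0.ne', rpow_one]
    field_simp [(sub_pos.2 hp).ne']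
  have hu_cont : ContinuousOn u (Icc 0 (piP p)) := fun x hx => (huderiv x hx).continuousWithinAt
  obtain ⟨x₀, hx₀, hmax⟩ := isCompact_Icc.exists_sSup_image_eq (f := fun x => |u x|)
    (nonempty_Icc.2 (piP_nonneg hp0)) (continuous_abs.comp_continuousOn hu_cont)
  have hint' : IntervalIntegrable (fun x => |u' x| ^ p) volume 0 (piP p) :=
    ((continuous_abs_rpow hp0.le).comp_continuousOn hu').intervalIntegrable_of_Icc (piP_nonneg hp0)
  have hint : IntervalIntegrable (fun x => |u x| ^ p) volume 0 (piP p) :=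
    ((continuous_abs_rpow hp0.le).comp_continuousOn hu_cont).intervalIntegrable_of_Icc
      (piP_nonneg hp0)
  have henergy : ∫ x in (0 : ℝ)..piP p, (|u' x| ^ p + (p - 1) * K ^ p * |u x| ^ p) =
      (∫ x in (0 : ℝ)..piP p, |u' x| ^ p) - lam * ∫ x in (0 : ℝ)..piP p, |u x| ^ p := by
    rw [intervalIntegral.integral_add hint' (hint.const_mul _), intervalIntegral.integral_const_mul,
      hKp, neg_mul, sub_eq_add_neg]
  rw [hmax, ← henergy, mul_div_assoc]
  simpa [cothWeight, mul_assoc] using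
    two_mul_cothWeight_mul_abs_rpow_le_integral hp hK0 hu' huderiv hu0 hupi hx₀
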